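/- Let R be a commutative ring. Consider a commutative diagram of R-modules with exact rows 0 → P' →(j_P) P →(q_P) P'' → 0 and 0 → Q' →(j_Q) Q →(q_Q) Q'' → 0 and injective vertical maps i' : P' → Q', i : P → Q, i'' : P'' → Q''. Assume that the top row is split (there exist R-linear maps h_P : P → P' and t_P : P'' → P with j_P ∘ h_P + t_P ∘ q_P = id_P, h_P ∘ j_P = id, q_P ∘ t_P = id), that i admits an R-linear retraction, and that s'' : Q'' → P'' is an R-linear retraction of i'' (s'' ∘ i'' = id). Then there exist R-linear retractions s : Q → P of i and s' : Q' → P' of i' such that q_P ∘ s = s'' ∘ q_Q and j_P ∘ s' = s ∘ j_Q. -/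

import Mathlib

/-!
Glue the retraction of the middle map from two pieces: its `P'`-component is taken from an
arbitrary retraction `s₀` of `i`, its `P''`-component from `s''`, i.e.
`s := jP ∘ hP ∘ s₀ + tP ∘ s'' ∘ qQ`. Then `qP ∘ s = s'' ∘ qQ`, so `s ∘ jQ` has no
`P''`-component and therefore factors through `jP` as `jP ∘ s'` with `s' := hP ∘ s ∘ jQ`.
-/

universe u

namespace LinearMap

variable {R P' P P'' Q' Q Q'' : Type*} [Semiring R]
  [AddCommMonoid P'] [AddCommMonoid P] [AddCommMonoid P'']
  [AddCommMonoid Q'] [AddCommMonoid Q] [AddCommMonoid Q'']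
  [Module R P'] [Module R P] [Module R P''] [Module R Q'] [Module R Q] [Module R Q'']
  {jP : P' →ₗ[R] P} {hP : P →ₗ[R] P'} {tP : P'' →ₗ[R] P} {qP : P →ₗ[R] P''}
  {jQ : Q' →ₗ[R] Q} {qQ : Q →ₗ[R] Q''}

theorem glued_comp_eq_id {i : P →ₗ[R] Q} {i'' : P'' →ₗ[R] Q''}
    {s₀ : Q →ₗ[R] P} {s'' : Q'' →ₗ[R] P''}
    (hsplit : jP ∘ₗ hP + tP ∘ₗ qP = id) (hs₀ : s₀ ∘ₗ i = id)
    (hcomm : i'' ∘ₗ qP = qQ ∘ₗ i) (hs'' : s'' ∘ₗ i'' = id) :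
    (jP ∘ₗ hP ∘ₗ s₀ + tP ∘ₗ s'' ∘ₗ qQ) ∘ₗ i = id :=
  calc (jP ∘ₗ hP ∘ₗ s₀ + tP ∘ₗ s'' ∘ₗ qQ) ∘ₗ i
      = jP ∘ₗ hP ∘ₗ (s₀ ∘ₗ i) + tP ∘ₗ (s'' ∘ₗ i'') ∘ₗ qP := by
        simp only [add_comp, comp_assoc, hcomm]
    _ = id := by rw [hs₀, hs'', comp_id, id_comp, hsplit]

theorem comp_glued_eq {s₀ : Q →ₗ[R] P} {s'' : Q'' →ₗ[R] P''}
    (hqj : qP ∘ₗ jP = 0) (hsect : qP ∘ₗ tP = id) :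
    qP ∘ₗ (jP ∘ₗ hP ∘ₗ s₀ + tP ∘ₗ s'' ∘ₗ qQ) = s'' ∘ₗ qQ :=
  calc qP ∘ₗ (jP ∘ₗ hP ∘ₗ s₀ + tP ∘ₗ s'' ∘ₗ qQ)
      = (qP ∘ₗ jP) ∘ₗ hP ∘ₗ s₀ + (qP ∘ₗ tP) ∘ₗ s'' ∘ₗ qQ := by simp only [comp_add, comp_assoc]
    _ = s'' ∘ₗ qQ := by rw [hqj, hsect, zero_comp, zero_add, id_comp]

theorem comp_restrict_eq_id {i' : P' →ₗ[R] Q'} {i : P →ₗ[R] Q} {s : Q →ₗ[R] P}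
    (hretr : hP ∘ₗ jP = id) (hcomm : i ∘ₗ jP = jQ ∘ₗ i') (hs : s ∘ₗ i = id) :
    (hP ∘ₗ s ∘ₗ jQ) ∘ₗ i' = id :=
  calc (hP ∘ₗ s ∘ₗ jQ) ∘ₗ i' = hP ∘ₗ (s ∘ₗ i) ∘ₗ jP := by simp only [comp_assoc, hcomm]
    _ = id := by rw [hs, id_comp, hretr]

theorem comp_restrict_eq {s : Q →ₗ[R] P} {s'' : Q'' →ₗ[R] P''}
    (hsplit : jP ∘ₗ hP + tP ∘ₗ qP = id) (hqj : qQ ∘ₗ jQ = 0) (hs : qP ∘ₗ s = s'' ∘ₗ qQ) :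
    jP ∘ₗ hP ∘ₗ s ∘ₗ jQ = s ∘ₗ jQ :=
  calc jP ∘ₗ hP ∘ₗ s ∘ₗ jQ = jP ∘ₗ hP ∘ₗ s ∘ₗ jQ + tP ∘ₗ s'' ∘ₗ (qQ ∘ₗ jQ) := by
        rw [hqj, comp_zero, comp_zero, add_zero]
    _ = (jP ∘ₗ hP + tP ∘ₗ qP) ∘ₗ s ∘ₗ jQ := by
        simp only [add_comp, comp_assoc, ← comp_assoc jQ qQ s'', ← hs]
    _ = s ∘ₗ jQ := by rw [hsplit, id_comp]

end LinearMap

open LinearMap in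
theorem exists_compatible_retractions (R : Type u) [CommRing R]
    (P' P P'' Q' Q Q'' : Type u)
    [AddCommGroup P'] [AddCommGroup P] [AddCommGroup P'']
    [AddCommGroup Q'] [AddCommGroup Q] [AddCommGroup Q'']
    [Module R P'] [Module R P] [Module R P'']
    [Module R Q'] [Module R Q] [Module R Q'']
    (jP : P' →ₗ[R] P) (qP : P →ₗ[R] P'')
    (jQ : Q' →ₗ[R] Q) (qQ : Q →ₗ[R] Q'')
    (i' : P' →ₗ[R] Q') (i : P →ₗ[R] Q) (i'' : P'' →ₗ[R] Q'')
    -- exactness of the rows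
    (hPexact : LinearMap.range jP = LinearMap.ker qP)
    (hQexact : LinearMap.range jQ = LinearMap.ker qQ)
    -- commutativity of the diagram
    (hcomm₁ : i ∘ₗ jP = jQ ∘ₗ i') (hcomm₂ : i'' ∘ₗ qP = qQ ∘ₗ i)
    -- a splitting of the top row
    (hP : P →ₗ[R] P') (tP : P'' →ₗ[R] P)
    (hsplit : jP ∘ₗ hP + tP ∘ₗ qP = LinearMap.id)
    (hretr : hP ∘ₗ jP = LinearMap.id) (hsect : qP ∘ₗ tP = LinearMap.id)
    -- `i` admits a retraction, and `s''` is a retraction of `i''`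
    (hi_retr : ∃ s₀ : Q →ₗ[R] P, s₀ ∘ₗ i = LinearMap.id)
    (s'' : Q'' →ₗ[R] P'') (hs'' : s'' ∘ₗ i'' = LinearMap.id) :
    ∃ (s : Q →ₗ[R] P) (s' : Q' →ₗ[R] P'),
      s ∘ₗ i = LinearMap.id ∧ s' ∘ₗ i' = LinearMap.id ∧
      qP ∘ₗ s = s'' ∘ₗ qQ ∧ jP ∘ₗ s' = s ∘ₗ jQ := by
  obtain ⟨s₀, hs₀⟩ := hi_retr
  have hsi := glued_comp_eq_id hsplit hs₀ hcomm₂ hs''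
  have hqs : qP ∘ₗ (jP ∘ₗ hP ∘ₗ s₀ + tP ∘ₗ s'' ∘ₗ qQ) = s'' ∘ₗ qQ :=
    comp_glued_eq (range_le_ker_iff.mp hPexact.le) hsect
  exact ⟨_, _, hsi, comp_restrict_eq_id hretr hcomm₁ hsi, hqs,
    comp_restrict_eq hsplit (range_le_ker_iff.mp hQexact.le) hqs⟩
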